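/- arXiv:2107.05798 — 2 statements merged into one kernel-verified Lean document; each statement's English description precedes it below -/
import Mathlib

section
/- Improvement-loss bound for replacing the interpolated stationary distribution by the current one: Let π_{K+1} and π_K be policies of a finite MDP with π_K(s,a) > 0 for all s, a, suppose max_{s∈S} D_KL(π_{K+1}(s,·) ‖ π_K(s,·)) ≤ 2C for some C ≥ 0, let ζ ∈ [0,1], and define π̃(s,a) = ζ·π_{K+1}(s,a) + (1−ζ)·π_K(s,a). Then |∑_{s∈S} (d^{π̃}(s) − d^{π_K}(s)) · A^{π̃}_{π_K}(s)| ≤ 4γζ²C/(1−γ)³. -/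
open Finset

/-- A finite Markov decision process with bounded rewards and discount `γ ∈ (0,1)`. -/
structure FiniteMDP (S A : Type) [Fintype S] [Fintype A] : Type where
  P : S → A → S → ℝ
  r : S → A → ℝ
  γ : ℝ
  s0 : S
  P_nonneg : ∀ s a s', 0 ≤ P s a s'
  P_sum_one : ∀ s a, ∑ s', P s a s' = 1
  r_bound : ∀ s a, |r s a| ≤ 1
  γ_pos : 0 < γ
  γ_lt_one : γ < 1

variable {S A : Type} [Fintype S] [Fintype A] [DecidableEq S]

/-- `π` is a (stochastic) policy. -/
def IsPolicy (π : S → A → ℝ) : Prop :=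
  (∀ s a, 0 ≤ π s a) ∧ ∀ s, ∑ a, π s a = 1

/-- `Q` satisfies the Bellman equation of policy `π`. -/
def IsQ (M : FiniteMDP S A) (π Q : S → A → ℝ) : Prop :=
  ∀ s a, Q s a = M.r s a + M.γ * ∑ s', M.P s a s' * ∑ a', π s' a' * Q s' a'

/-- `d` is the discounted state (occupancy) distribution of policy `π`. -/
def IsD (M : FiniteMDP S A) (π : S → A → ℝ) (d : S → ℝ) : Prop :=
  ∀ s', d s' = (1 - M.γ) * (if s' = M.s0 then (1 : ℝ) else 0)
      + M.γ * ∑ s, d s * ∑ a, π s a * M.P s a s'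

/-- The normalized return `J^π = ∑_s d^π(s) ∑_a π(s,a) r(s,a)`. -/
def Jret (M : FiniteMDP S A) (π : S → A → ℝ) (d : S → ℝ) : ℝ :=
  ∑ s, d s * ∑ a, π s a * M.r s a

/-- The policy advantage function `A^{π'}_π(s) = ∑_a (π'(s,a) − π(s,a)) Q_π(s,a)`. -/
def polAdv (π' π Q : S → A → ℝ) (s : S) : ℝ :=
  ∑ a, (π' s a - π s a) * Q s a

/-- The expected policy advantage `A^{π'}_{π,d}`. -/
def expPolAdv (π' π Q : S → A → ℝ) (d : S → ℝ) : ℝ :=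
  ∑ s, d s * polAdv π' π Q s

/-- `δ(π',π) = max_s ∑_a |π'(s,a) − π(s,a)|`. -/
noncomputable def polDist (π' π : S → A → ℝ) : ℝ :=
  ⨆ s : S, ∑ a, |π' s a - π s a|

/-- `ΔA^{π'}_π = max_{s,s'} |A^{π'}_π(s) − A^{π'}_π(s')|`. -/
noncomputable def advRange (π' π Q : S → A → ℝ) : ℝ :=
  ⨆ p : S × S, |polAdv π' π Q p.1 - polAdv π' π Q p.2|

/-- Kullback–Leibler divergence between probability vectors on a finite set. -/
noncomputable def KLdiv {B : Type} [Fintype B] (p q : B → ℝ) : ℝ :=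
  ∑ a ∈ Finset.univ.filter (fun a => 0 < p a), p a * Real.log (p a / q a)

/-!
Pinsker's inequality gives `∑ₐ |π̃(s,a) − π_K(s,a)| = ζ ∑ₐ |π_{K+1}(s,a) − π_K(s,a)| ≤ 2ζ√C =: δ`
at every state. Since `|Q_{π_K}| ≤ 1/(1−γ)`, the advantage is at most `δ/(1−γ)` in absolute value.
The occupancy measures are fixed points of `d ↦ (1−γ)𝟙_{s₀} + γ d P_π`, a `γ`-contraction in `ℓ¹`,
and the kernels `P_π̃`, `P_{π_K}` differ by at most `δ` per row in `ℓ¹`; hence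
`‖d^{π̃} − d^{π_K}‖₁ ≤ γ(‖d^{π̃} − d^{π_K}‖₁ + δ)`, i.e. `‖d^{π̃} − d^{π_K}‖₁ ≤ γδ/(1−γ)`.
Multiplying gives `γδ²/(1−γ)² = 4γζ²C/(1−γ)²`, which is at most the claimed bound.

Pinsker's inequality itself follows from Sedrakyan's form of Cauchy–Schwarz with weights
`p + 2q` and the pointwise bound `3(p − q)² ≤ 2(p + 2q)(p log(p/q) − p + q)`.
-/

open Real (log)

lemma isMinOn_of_hasDerivAt_of_monotoneOn {s : Set ℝ} [s.OrdConnected] {f f' : ℝ → ℝ} {c : ℝ}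
    (hf : ∀ y ∈ s, HasDerivAt f (f' y) y) (hf' : MonotoneOn f' s) (hc : c ∈ s) (hfc : f' c = 0) :
    IsMinOn f s c := by
  refine isMinOn_iff.2 fun x hx => ?_
  have hcont : ContinuousOn f s := fun y hy => (hf y hy).continuousAt.continuousWithinAt
  rcases lt_trichotomy x c with hxc | rfl | hcx
  · have hIcc := Set.Icc_subset s hx hc
    obtain ⟨ξ, hξ, hslope⟩ := exists_hasDerivAt_eq_slope f f' hxc (hcont.mono hIcc)
      fun y hy => hf y (hIcc (Set.Ioo_subset_Icc_self hy))
    have hξc : f' ξ ≤ 0 := hfc ▸ hf' (hIcc (Set.Ioo_subset_Icc_self hξ)) hc hξ.2.le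
    rw [eq_div_iff (sub_ne_zero.2 hxc.ne')] at hslope
    nlinarith [hξ.2]
  · exact le_rfl
  · have hIcc := Set.Icc_subset s hc hx
    obtain ⟨ξ, hξ, hslope⟩ := exists_hasDerivAt_eq_slope f f' hcx (hcont.mono hIcc)
      fun y hy => hf y (hIcc (Set.Ioo_subset_Icc_self hy))
    have hξc : 0 ≤ f' ξ := hfc ▸ hf' hc (hIcc (Set.Ioo_subset_Icc_self hξ)) hξ.1.le
    rw [eq_div_iff (sub_ne_zero.2 hcx.ne')] at hslope
    nlinarith [hξ.1]

/-- The function `F x = 2(x+2)(x log x − x + 1) − 3(x−1)²` has `F(1) = F'(1) = 0` and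
`F''(x) = 4(log x + 1/x − 1) ≥ 0`. -/
lemma three_mul_sub_one_sq_le {x : ℝ} (hx : 0 ≤ x) :
    3 * (x - 1) ^ 2 ≤ 2 * (x + 2) * (x * log x - x + 1) := by
  rcases hx.eq_or_lt with rfl | hx
  · norm_num
  set F : ℝ → ℝ := fun y => 2 * (y + 2) * (y * log y - y + 1) - 3 * (y - 1) ^ 2
  set H : ℝ → ℝ := fun y => 2 * (y * log y - y + 1) + 2 * (y + 2) * log y - 6 * (y - 1)
  have hF : ∀ y ∈ Set.Ioi (0 : ℝ), HasDerivAt F (H y) y := fun y (hy : 0 < y) => by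
    have hmul := ((Real.hasDerivAt_mul_log hy.ne').sub (hasDerivAt_id y)).add_const 1
    have hlin := ((hasDerivAt_id y).add_const 2).const_mul 2
    exact ((hlin.mul hmul).sub ((((hasDerivAt_id y).sub_const 1).pow 2).const_mul 3)).congr_deriv
      (by simp only [H, id, Pi.sub_apply]; ring)
  have hH : ∀ y ∈ Set.Ioi (0 : ℝ), HasDerivAt H (4 * (log y + y⁻¹ - 1)) y :=
      fun y (hy : 0 < y) => by
    have hmul := (((Real.hasDerivAt_mul_log hy.ne').sub (hasDerivAt_id y)).add_const 1).const_mul 2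
    have hlin := ((hasDerivAt_id y).add_const 2).const_mul 2
    exact ((hmul.add (hlin.mul (Real.hasDerivAt_log hy.ne'))).sub
      (((hasDerivAt_id y).sub_const 1).const_mul 6)).congr_deriv
      (by field_simp; simp only [id]; ring)
  have hHmono : MonotoneOn H (Set.Ioi 0) := by
    refine monotoneOn_of_hasDerivWithinAt_nonneg (f' := fun y => 4 * (log y + y⁻¹ - 1))
      (convex_Ioi 0) (fun y hy => (hH y hy).continuousAt.continuousWithinAt) (fun y hy => ?_)
      (fun y hy => ?_)
    · rw [interior_Ioi] at hy ⊢
      exact (hH y hy).hasDerivWithinAt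
    · rw [interior_Ioi] at hy
      linarith [Real.one_sub_inv_le_log_of_pos (Set.mem_Ioi.1 hy)]
  have hmin := isMinOn_iff.1 (isMinOn_of_hasDerivAt_of_monotoneOn hF hHmono
    (Set.mem_Ioi.2 one_pos) (by simp [H])) x hx
  simp only [F] at hmin
  norm_num at hmin
  linarith

lemma three_mul_sub_sq_le {p q : ℝ} (hp : 0 ≤ p) (hq : 0 < q) :
    3 * (p - q) ^ 2 ≤ 2 * (p + 2 * q) * (p * log (p / q) - p + q) := by
  have hq' := hq.ne'
  calc 3 * (p - q) ^ 2 = q ^ 2 * (3 * (p / q - 1) ^ 2) := by field_simp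
    _ ≤ q ^ 2 * (2 * (p / q + 2) * (p / q * log (p / q) - p / q + 1)) :=
        mul_le_mul_of_nonneg_left (three_mul_sub_one_sq_le (div_nonneg hp hq.le)) (sq_nonneg q)
    _ = 2 * (p + 2 * q) * (p * log (p / q) - p + q) := by field_simp

lemma KLdiv_eq_sum {B : Type} [Fintype B] {p : B → ℝ} (q : B → ℝ) (hp : ∀ a, 0 ≤ p a) :
    KLdiv p q = ∑ a, p a * log (p a / q a) :=
  sum_filter_of_ne fun a _ ha => lt_of_le_of_ne (hp a) (left_ne_zero_of_mul ha).symm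

theorem sq_sum_abs_sub_le_two_mul_KLdiv {B : Type} [Fintype B] {p q : B → ℝ}
    (hp : ∀ a, 0 ≤ p a) (hq : ∀ a, 0 < q a) (hp1 : ∑ a, p a = 1) (hq1 : ∑ a, q a = 1) :
    (∑ a, |p a - q a|) ^ 2 ≤ 2 * KLdiv p q := by
  have hw : ∀ a ∈ univ, 0 < p a + 2 * q a := fun a _ => by linarith [hp a, hq a]
  have hw3 : ∑ a, (p a + 2 * q a) = 3 := by
    rw [sum_add_distrib, ← mul_sum, hp1, hq1]; norm_num
  have hterm : ∀ a ∈ univ,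
      |p a - q a| ^ 2 / (p a + 2 * q a) ≤ 2 / 3 * (p a * log (p a / q a) - p a + q a) :=
    fun a ha => by
      rw [sq_abs, div_le_iff₀ (hw a ha)]
      linarith [three_mul_sub_sq_le (hp a) (hq a)]
  have hKL : ∑ a, (p a * log (p a / q a) - p a + q a) = KLdiv p q := by
    rw [sum_add_distrib, sum_sub_distrib, hp1, hq1, KLdiv_eq_sum q hp]; ring
  calc (∑ a, |p a - q a|) ^ 2 = 3 * ((∑ a, |p a - q a|) ^ 2 / ∑ a, (p a + 2 * q a)) := by
        rw [hw3]; ring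
    _ ≤ 3 * ∑ a, 2 / 3 * (p a * log (p a / q a) - p a + q a) := by
        gcongr
        exact (sq_sum_div_le_sum_sq_div univ _ hw).trans (sum_le_sum hterm)
    _ = 2 * KLdiv p q := by rw [← mul_sum, hKL]; ring

lemma sum_abs_sub_le_two_mul_sqrt_of_KLdiv_le {B : Type} [Fintype B] {p q : B → ℝ}
    (hp : ∀ a, 0 ≤ p a) (hq : ∀ a, 0 < q a) (hp1 : ∑ a, p a = 1) (hq1 : ∑ a, q a = 1) {C : ℝ}
    (hC : 0 ≤ C) (hKL : KLdiv p q ≤ 2 * C) : ∑ a, |p a - q a| ≤ 2 * √C := by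
  refine (pow_le_pow_iff_left₀ (sum_nonneg fun a _ => abs_nonneg _) (by positivity)
    two_ne_zero).1 ?_
  rw [mul_pow, Real.sq_sqrt hC]
  linarith [sq_sum_abs_sub_le_two_mul_KLdiv hp hq hp1 hq1]

lemma abs_sum_mul_le_of_abs_le {ι : Type} [Fintype ι] {w v : ι → ℝ} {m : ℝ}
    (hw0 : ∀ i, 0 ≤ w i) (hw1 : ∑ i, w i = 1) (hv : ∀ i, |v i| ≤ m) : |∑ i, w i * v i| ≤ m :=
  calc |∑ i, w i * v i| ≤ ∑ i, w i * m := (abs_sum_le_sum_abs _ _).trans <|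
        sum_le_sum fun i _ => by rw [abs_mul, abs_of_nonneg (hw0 i)]; gcongr; exacts [hw0 i, hv i]
    _ = m := by rw [← sum_mul, hw1, one_mul]

lemma sum_abs_sum_mul_le {ι κ : Type} [Fintype ι] [Fintype κ] (x : ι → ℝ) {K : ι → κ → ℝ}
    {δ : ℝ} (hK : ∀ i, ∑ j, |K i j| ≤ δ) : ∑ j, |∑ i, x i * K i j| ≤ (∑ i, |x i|) * δ :=
  calc ∑ j, |∑ i, x i * K i j| ≤ ∑ j, ∑ i, |x i| * |K i j| :=
        sum_le_sum fun j _ => (abs_sum_le_sum_abs _ _).trans_eq (by simp only [abs_mul])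
    _ = ∑ i, |x i| * ∑ j, |K i j| := by rw [sum_comm]; simp only [mul_sum]
    _ ≤ ∑ i, |x i| * δ := sum_le_sum fun i _ => mul_le_mul_of_nonneg_left (hK i) (abs_nonneg _)
    _ = (∑ i, |x i|) * δ := (sum_mul _ _ _).symm

lemma sum_abs_mix_sub {B : Type} [Fintype B] (p q : B → ℝ) {ζ : ℝ} (hζ : 0 ≤ ζ) :
    ∑ a, |ζ * p a + (1 - ζ) * q a - q a| = ζ * ∑ a, |p a - q a| := by
  rw [mul_sum]
  refine sum_congr rfl fun a _ => ?_
  rw [show ζ * p a + (1 - ζ) * q a - q a = ζ * (p a - q a) by ring, abs_mul, abs_of_nonneg hζ]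

section

omit [Fintype S] [DecidableEq S]

lemma IsPolicy.mix {π' π : S → A → ℝ} (hπ' : IsPolicy π') (hπ : IsPolicy π) {ζ : ℝ}
    (hζ0 : 0 ≤ ζ) (hζ1 : ζ ≤ 1) : IsPolicy fun s a => ζ * π' s a + (1 - ζ) * π s a := by
  refine ⟨fun s a => ?_, fun s => ?_⟩
  · exact add_nonneg (mul_nonneg hζ0 (hπ'.1 s a)) (mul_nonneg (sub_nonneg.2 hζ1) (hπ.1 s a))
  · rw [sum_add_distrib, ← mul_sum, ← mul_sum, hπ'.2 s, hπ.2 s]; ring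

lemma abs_polAdv_le {π' π Q : S → A → ℝ} {s : S} {B : ℝ} (hQ : ∀ a, |Q s a| ≤ B) :
    |polAdv π' π Q s| ≤ (∑ a, |π' s a - π s a|) * B :=
  calc |polAdv π' π Q s| ≤ ∑ a, |π' s a - π s a| * B := (abs_sum_le_sum_abs _ _).trans <|
        sum_le_sum fun a _ => by rw [abs_mul]; exact mul_le_mul_of_nonneg_left (hQ a) (abs_nonneg _)
    _ = (∑ a, |π' s a - π s a|) * B := (sum_mul _ _ _).symm

end

section

omit [DecidableEq S]

namespace FiniteMDP

variable (M : FiniteMDP S A)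

lemma one_sub_γ_pos : 0 < 1 - M.γ := sub_pos.2 M.γ_lt_one

def stateKernel (π : S → A → ℝ) (s s' : S) : ℝ := ∑ a, π s a * M.P s a s'

lemma sum_abs_stateKernel {π : S → A → ℝ} (hπ : IsPolicy π) (s : S) :
    ∑ s', |M.stateKernel π s s'| = 1 := by
  simp only [stateKernel]
  rw [sum_congr rfl fun s' _ =>
    abs_of_nonneg (sum_nonneg fun a _ => mul_nonneg (hπ.1 s a) (M.P_nonneg s a s')), sum_comm]
  simp only [← mul_sum, M.P_sum_one, mul_one, hπ.2 s]

lemma sum_abs_stateKernel_sub_le (π' π : S → A → ℝ) (s : S) :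
    ∑ s', |M.stateKernel π' s s' - M.stateKernel π s s'| ≤ ∑ a, |π' s a - π s a| := by
  have hP : ∀ a, ∑ s', |M.P s a s'| ≤ 1 := fun a => by
    simp only [abs_of_nonneg (M.P_nonneg s a _), M.P_sum_one, le_refl]
  simpa only [stateKernel, sub_mul, sum_sub_distrib, mul_one] using
    sum_abs_sum_mul_le (fun a => π' s a - π s a) hP

end FiniteMDP

lemma IsQ.abs_le {M : FiniteMDP S A} {π Q : S → A → ℝ} (hπ : IsPolicy π) (hQ : IsQ M π Q)
    (s : S) (a : A) : |Q s a| ≤ 1 / (1 - M.γ) := by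
  have : Nonempty (S × A) := ⟨(s, a)⟩
  obtain ⟨⟨s₀, a₀⟩, -, hmax⟩ :=
    exists_max_image univ (fun p : S × A => |Q p.1 p.2|) univ_nonempty
  have hQm : ∀ s a, |Q s a| ≤ |Q s₀ a₀| := fun s a => hmax (s, a) (mem_univ _)
  have hV : ∀ s', |∑ a', π s' a' * Q s' a'| ≤ |Q s₀ a₀| := fun s' =>
    abs_sum_mul_le_of_abs_le (hπ.1 s') (hπ.2 s') (hQm s')
  have hrec : |Q s₀ a₀| ≤ 1 + M.γ * |Q s₀ a₀| := by
    conv_lhs => rw [hQ s₀ a₀]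
    refine (abs_add_le _ _).trans (add_le_add (M.r_bound s₀ a₀) ?_)
    rw [abs_mul, abs_of_pos M.γ_pos]
    exact mul_le_mul_of_nonneg_left
      (abs_sum_mul_le_of_abs_le (M.P_nonneg s₀ a₀) (M.P_sum_one s₀ a₀) hV) M.γ_pos.le
  refine (hQm s a).trans ((le_div_iff₀ M.one_sub_γ_pos).2 ?_)
  linarith

end

lemma IsD.sum_abs_le_one {M : FiniteMDP S A} {π : S → A → ℝ} {d : S → ℝ} (hπ : IsPolicy π)
    (hd : IsD M π d) : ∑ s, |d s| ≤ 1 := by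
  have hγ := M.one_sub_γ_pos
  have hrec : ∑ s, |d s| ≤ (1 - M.γ) + M.γ * ∑ s, |d s| :=
    calc ∑ s', |d s'| ≤ ∑ s', ((1 - M.γ) * (if s' = M.s0 then 1 else 0)
          + M.γ * |∑ s, d s * M.stateKernel π s s'|) := sum_le_sum fun s' _ => by
          rw [hd s']
          refine (abs_add_le _ _).trans_eq ?_
          rw [abs_mul, abs_mul, abs_of_pos hγ, abs_of_pos M.γ_pos, abs_of_nonneg (by positivity)]
          rfl
      _ ≤ (1 - M.γ) + M.γ * ∑ s, |d s| := by
          rw [sum_add_distrib, ← mul_sum, ← mul_sum, sum_ite_eq' univ M.s0, if_pos (mem_univ _),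
            mul_one]
          have hK := sum_abs_sum_mul_le d fun s => (M.sum_abs_stateKernel hπ s).le
          rw [mul_one] at hK
          exact add_le_add le_rfl (mul_le_mul_of_nonneg_left hK M.γ_pos.le)
  nlinarith

lemma IsD.sum_abs_sub_le {M : FiniteMDP S A} {π' π : S → A → ℝ} {d' d : S → ℝ}
    (hπ' : IsPolicy π') (hπ : IsPolicy π) (hd' : IsD M π' d') (hd : IsD M π d) {δ : ℝ}
    (hδ : ∀ s, ∑ a, |π' s a - π s a| ≤ δ) :
    ∑ s, |d' s - d s| ≤ M.γ * δ / (1 - M.γ) := by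
  have hδ0 : 0 ≤ δ := (sum_nonneg fun a _ => abs_nonneg _).trans (hδ M.s0)
  have hdiff : ∀ s', d' s' - d s' = M.γ * (∑ s, (d' s - d s) * M.stateKernel π' s s'
      + ∑ s, d s * (M.stateKernel π' s s' - M.stateKernel π s s')) := fun s' => by
    rw [hd' s', hd s']
    simp only [FiniteMDP.stateKernel, sub_mul, mul_sub, sum_sub_distrib]
    ring
  have hrec : ∑ s, |d' s - d s| ≤ M.γ * (∑ s, |d' s - d s| + δ) :=
    calc ∑ s', |d' s' - d s'| ≤ M.γ * (∑ s', |∑ s, (d' s - d s) * M.stateKernel π' s s'|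
          + ∑ s', |∑ s, d s * (M.stateKernel π' s s' - M.stateKernel π s s')|) := by
          rw [← sum_add_distrib, mul_sum]
          refine sum_le_sum fun s' _ => ?_
          rw [hdiff s', abs_mul, abs_of_pos M.γ_pos]
          exact mul_le_mul_of_nonneg_left (abs_add_le _ _) M.γ_pos.le
      _ ≤ M.γ * ((∑ s, |d' s - d s|) * 1 + (∑ s, |d s|) * δ) := by
          refine mul_le_mul_of_nonneg_left (add_le_add ?_ ?_) M.γ_pos.le
          · exact sum_abs_sum_mul_le _ fun s => (M.sum_abs_stateKernel hπ' s).le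
          · exact sum_abs_sum_mul_le _ fun s => (M.sum_abs_stateKernel_sub_le π' π s).trans (hδ s)
      _ ≤ M.γ * (∑ s, |d' s - d s| + δ) := by
          have hd1 := hd.sum_abs_le_one hπ
          have : (∑ s, |d s|) * δ ≤ δ := by nlinarith
          nlinarith [M.γ_pos]
  rw [le_div_iff₀ M.one_sub_γ_pos]
  linarith

theorem abs_sum_sub_mul_polAdv_le {M : FiniteMDP S A} {π' π Q : S → A → ℝ} {d' d : S → ℝ}
    (hπ' : IsPolicy π') (hπ : IsPolicy π) (hQ : IsQ M π Q) (hd' : IsD M π' d') (hd : IsD M π d)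
    {δ : ℝ} (hδ : ∀ s, ∑ a, |π' s a - π s a| ≤ δ) :
    |∑ s, (d' s - d s) * polAdv π' π Q s| ≤ M.γ * δ ^ 2 / (1 - M.γ) ^ 2 := by
  have hγ := M.one_sub_γ_pos
  have hδ0 : 0 ≤ δ := (sum_nonneg fun a _ => abs_nonneg _).trans (hδ M.s0)
  have hA : ∀ s, |polAdv π' π Q s| ≤ δ / (1 - M.γ) := fun s =>
    calc |polAdv π' π Q s| ≤ (∑ a, |π' s a - π s a|) * (1 / (1 - M.γ)) :=
          abs_polAdv_le (hQ.abs_le hπ s)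
      _ ≤ δ * (1 / (1 - M.γ)) := mul_le_mul_of_nonneg_right (hδ s) (one_div_pos.2 hγ).le
      _ = δ / (1 - M.γ) := mul_one_div _ _
  calc |∑ s, (d' s - d s) * polAdv π' π Q s| ≤ ∑ s, |d' s - d s| * (δ / (1 - M.γ)) :=
        (abs_sum_le_sum_abs _ _).trans <| sum_le_sum fun s _ => by
          rw [abs_mul]; exact mul_le_mul_of_nonneg_left (hA s) (abs_nonneg _)
    _ = (∑ s, |d' s - d s|) * (δ / (1 - M.γ)) := (sum_mul _ _ _).symm
    _ ≤ M.γ * δ / (1 - M.γ) * (δ / (1 - M.γ)) :=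
        mul_le_mul_of_nonneg_right (hd'.sum_abs_sub_le hπ' hπ hd hδ)
          (div_nonneg hδ0 hγ.le)
    _ = M.γ * δ ^ 2 / (1 - M.γ) ^ 2 := by field_simp

theorem improvement_loss_bound_general
    {S A : Type} [Fintype S] [Fintype A] [DecidableEq S]
    (M : FiniteMDP S A) (πK1 πK Q : S → A → ℝ) (C ζ : ℝ) (πt : S → A → ℝ) (dt d : S → ℝ)
    (hπK1 : IsPolicy πK1) (hπK : IsPolicy πK) (hπKpos : ∀ s a, 0 < πK s a)
    (hQ : IsQ M πK Q)
    (hC : 0 ≤ C)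
    (hKL : (⨆ s : S, KLdiv (πK1 s) (πK s)) ≤ 2 * C)
    (hζ0 : 0 ≤ ζ) (hζ1 : ζ ≤ 1)
    (hmix : ∀ s a, πt s a = ζ * πK1 s a + (1 - ζ) * πK s a)
    (hdt : IsD M πt dt) (hd : IsD M πK d) :
    |∑ s, (dt s - d s) * polAdv πt πK Q s| ≤
      4 * M.γ * ζ ^ 2 * C / (1 - M.γ) ^ 3 := by
  obtain rfl : πt = fun s a => ζ * πK1 s a + (1 - ζ) * πK s a := funext₂ hmix
  have hγ := M.γ_pos
  have hγ1 := M.one_sub_γ_pos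
  have hδ : ∀ s, ∑ a, |ζ * πK1 s a + (1 - ζ) * πK s a - πK s a| ≤ ζ * (2 * √C) := fun s => by
    have hKLs : KLdiv (πK1 s) (πK s) ≤ 2 * C := (le_ciSup (Set.finite_range _).bddAbove s).trans hKL
    rw [sum_abs_mix_sub _ _ hζ0]
    exact mul_le_mul_of_nonneg_left (sum_abs_sub_le_two_mul_sqrt_of_KLdiv_le (hπK1.1 s) (hπKpos s)
      (hπK1.2 s) (hπK.2 s) hC hKLs) hζ0
  calc _ ≤ M.γ * (ζ * (2 * √C)) ^ 2 / (1 - M.γ) ^ 2 :=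
        abs_sum_sub_mul_polAdv_le (hπK1.mix hπK hζ0 hζ1) hπK hQ hdt hd hδ
    _ = 4 * M.γ * ζ ^ 2 * C / (1 - M.γ) ^ 2 := by rw [mul_pow, mul_pow, Real.sq_sqrt hC]; ring
    _ ≤ 4 * M.γ * ζ ^ 2 * C / (1 - M.γ) ^ 3 :=
        div_le_div_of_nonneg_left (by positivity) (by positivity)
          (pow_le_pow_of_le_one hγ1.le (by linarith) (by norm_num))

/-- **Improvement-loss bound for replacing the interpolated stationary
distribution by the current one**:
`|∑_s (d^{π̃}(s) − d^{π_K}(s))·A^{π̃}_{π_K}(s)| ≤ 4γζ²C/(1−γ)³`. -/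
theorem improvement_loss_bound
    {S A : Type} [Fintype S] [Fintype A] [DecidableEq S] [Nonempty S] [Nonempty A]
    (M : FiniteMDP S A) (πK1 πK Q : S → A → ℝ) (C ζ : ℝ) (πt : S → A → ℝ) (dt d : S → ℝ)
    (hπK1 : IsPolicy πK1) (hπK : IsPolicy πK) (hπKpos : ∀ s a, 0 < πK s a)
    (hQ : IsQ M πK Q)
    (hC : 0 ≤ C)
    (hKL : (⨆ s : S, KLdiv (πK1 s) (πK s)) ≤ 2 * C)
    (hζ0 : 0 ≤ ζ) (hζ1 : ζ ≤ 1)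
    (hmix : ∀ s a, πt s a = ζ * πK1 s a + (1 - ζ) * πK s a)
    (hdt : IsD M πt dt) (hd : IsD M πK d) :
    |∑ s, (dt s - d s) * polAdv πt πK Q s| ≤
      4 * M.γ * ζ ^ 2 * C / (1 - M.γ) ^ 3 :=
  improvement_loss_bound_general M πK1 πK Q C ζ πt dt d hπK1 hπK hπKpos hQ hC hKL hζ0 hζ1 hmix hdt
    hd
end

section
/- Closed form of the entropy-regularized policy recursion (induction stated after Eq. (19)): Let S and A be nonempty finite sets, α ∈ [0,1], β > 0, and let Q_0, Q_1, Q_2, … : S → A → ℝ be arbitrary functions. Define policies by π_0(s,a) = 1/|A| and π_{k+1}(s,a) = π_k(s,a)^α · exp(β·Q_k(s,a)) / ∑_{b∈A} π_k(s,b)^α · exp(β·Q_k(s,b)). Then for every K ≥ 0 and all s, a: π_K(s,a) = exp(β·∑_{j=0}^{K−1} α^{K−1−j}·Q_j(s,a)) / ∑_{b∈A} exp(β·∑_{j=0}^{K−1} α^{K−1−j}·Q_j(s,b)). -/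
open Finset

/-- **Closed form of the entropy-regularized policy recursion** (induction stated
after Eq. (19)): the recursively defined Boltzmann policies admit the closed form
`π_K(s,a) ∝ exp(β ∑_{j<K} α^{K−1−j} Q_j(s,a))`. -/
theorem entropy_regularized_policy_closed_form
    {S A : Type} [Fintype S] [Fintype A] [Nonempty S] [Nonempty A]
    (α β : ℝ) (hα0 : 0 ≤ α) (hα1 : α ≤ 1) (hβ : 0 < β)
    (Q : ℕ → S → A → ℝ) (π : ℕ → S → A → ℝ)
    (hπ0 : ∀ s a, π 0 s a = 1 / (Fintype.card A : ℝ))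
    (hπrec : ∀ k s a, π (k + 1) s a =
      π k s a ^ α * Real.exp (β * Q k s a)
        / ∑ b, π k s b ^ α * Real.exp (β * Q k s b)) :
    ∀ K s a, π K s a =
      Real.exp (β * ∑ j ∈ Finset.range K, α ^ (K - 1 - j) * Q j s a)
        / ∑ b, Real.exp (β * ∑ j ∈ Finset.range K, α ^ (K - 1 - j) * Q j s b) := by
  intro K
  induction K with
  | zero =>
    intro s a
    simp [hπ0, Finset.card_univ]
  | succ K IH =>
    intro s a
    -- notation
    set E : A → ℝ := fun b => β * ∑ j ∈ Finset.range K, α ^ (K - 1 - j) * Q j s b with hE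
    have hD : (0:ℝ) < ∑ b, Real.exp (E b) :=
      Finset.sum_pos (fun b _ => Real.exp_pos _) Finset.univ_nonempty
    have hexp : ∀ b, β * ∑ j ∈ Finset.range (K+1), α ^ (K + 1 - 1 - j) * Q j s b
        = α * E b + β * Q K s b := by
      intro b
      rw [Finset.sum_range_succ]
      have h1 : ∀ j ∈ Finset.range K, α ^ (K + 1 - 1 - j) * Q j s b
          = α * (α ^ (K - 1 - j) * Q j s b) := by
        intro j hj
        rw [Finset.mem_range] at hj
        have : K + 1 - 1 - j = (K - 1 - j) + 1 := by omega
        rw [this, pow_succ]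
        ring
      rw [Finset.sum_congr rfl h1, ← Finset.mul_sum]
      simp [hE]
      ring
    have hstep : ∀ b, π K s b ^ α * Real.exp (β * Q K s b)
        = Real.exp (α * E b + β * Q K s b) / (∑ c, Real.exp (E c)) ^ α := by
      intro b
      rw [IH s b, Real.div_rpow (Real.exp_pos _).le hD.le, ← Real.exp_mul,
        Real.exp_add, mul_comm (E b) α]
      ring
    rw [hπrec]
    simp only [hstep, hexp]
    have hc : (∑ c, Real.exp (E c)) ^ α ≠ 0 := (Real.rpow_pos_of_pos hD α).ne'
    have hS : (0:ℝ) < ∑ x, Real.exp (α * E x + β * Q K s x) :=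
      Finset.sum_pos (fun b _ => Real.exp_pos _) Finset.univ_nonempty
    rw [← Finset.sum_div]
    field_simp
end
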